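/- (Aliasing error bound for the DFT restricted to low modes.) Let v ∈ H^s(T^d) with s > d/2, N an integer with N > 1, and K an integer with 1 ≤ K < N/2. Define E(k) = DFT(v)(k) − v̂(k) for k ∈ [[K]]^d. Then (∑_{k ∈ [[K]]^d} |E(k)|²)^{1/2} ≤ α_{d,s} N^{−s} ‖v‖_{H^s}, where α_{d,s}² = (4d)^s ∑_{ℓ ∈ Z^d∖{0}} |ℓ|^{−2s}. -/

import Mathlib

open scoped BigOperators
open MeasureTheory Finset Filter

noncomputable section

/-- The symmetric frequency index set `[[N]]`, with `N` elements. -/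
def symmSet (N : ℕ) : Finset ℤ := Finset.Icc (-((N / 2 : ℕ) : ℤ)) (((N - 1) / 2 : ℕ) : ℤ)

/-- The symmetric frequency index set `[[N]]^d`. -/
def symmPi (d N : ℕ) : Finset (Fin d → ℤ) := Fintype.piFinset fun _ => symmSet N

/-- Grid point `x_n = n / N` on the torus, for `n ∈ [N]^d`. -/
def gridPt (d N : ℕ) (n : Fin d → Fin N) : Fin d → ℝ := fun i => (n i : ℝ) / (N : ℝ)

/-- The unit cube `[0,1]^d`, a fundamental domain for the torus `T^d`. -/
def cube (d : ℕ) : Set (Fin d → ℝ) := Set.univ.pi fun _ => Set.Icc (0 : ℝ) 1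

/-- The complex exponential `e^{2 π i ⟨k, x⟩}`. -/
def fexp (d : ℕ) (k : Fin d → ℤ) (x : Fin d → ℝ) : ℂ :=
  Complex.exp (2 * (Real.pi : ℂ) * Complex.I * ∑ i, (k i : ℂ) * (x i : ℂ))

/-- Discrete Fourier transform of grid values: `DFT(v)(k) = N^{-d} ∑_n v(x_n) e^{-2πi⟨k,x_n⟩}`. -/
def dft (d N : ℕ) (v : (Fin d → Fin N) → ℂ) (k : Fin d → ℤ) : ℂ :=
  ((N : ℂ) ^ d)⁻¹ * ∑ n : Fin d → Fin N, v n * fexp d (-k) (gridPt d N n)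

/-- Continuous Fourier coefficient `v̂(k) = ∫_{T^d} v(x) e^{-2πi⟨k,x⟩} dx`. -/
def fcoef (d : ℕ) (f : (Fin d → ℝ) → ℂ) (k : Fin d → ℤ) : ℂ :=
  ∫ x in cube d, f x * fexp d (-k) x

/-- Squared Euclidean norm `|k|²` of an integer vector. -/
def sqnormZ (d : ℕ) (k : Fin d → ℤ) : ℝ := ∑ i, ((k i : ℝ)) ^ 2


/-! Sampling `e^{2πi⟨m,x⟩}` on the grid and taking the DFT at `k` keeps exactly the frequencies
`m ≡ k (mod N)`, so `E(k) = ∑_{ℓ ≠ 0} v̂(k + Nℓ)`. For `|k_i| ≤ K < N/2` and `ℓ ≠ 0` one has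
`|k + Nℓ| ≥ (N/2)|ℓ|`, so Cauchy–Schwarz with the weights `1 + |k + Nℓ|^{2s}` bounds `|E(k)|²`
by `(4d)^s N^{-2s} ∑_{ℓ≠0} |ℓ|^{-2s}` times the `H^s` mass of `v̂` on the coset `k + Nℤ^d`.
These cosets are disjoint for `k ∈ [[K]]^d`, so summing over `k` leaves at most `‖v‖²_{H^s}`. -/

theorem IsPrimitiveRoot.sum_range_zpow_pow_eq_ite {K : Type*} [Field K] {ζ : K} {N : ℕ}
    (hζ : IsPrimitiveRoot ζ N) (m : ℤ) :
    ∑ j ∈ range N, (ζ ^ m) ^ j = if (N : ℤ) ∣ m then (N : K) else 0 := by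
  split_ifs with hdvd
  · simp [(hζ.zpow_eq_one_iff_dvd m).mpr hdvd]
  · have hpow : (ζ ^ m) ^ N = 1 := by
      rw [← zpow_natCast, ← zpow_mul, mul_comm, zpow_mul, zpow_natCast, hζ.pow_eq_one, one_zpow]
    rw [geom_sum_eq (mt (hζ.zpow_eq_one_iff_dvd m).mp hdvd), hpow, sub_self, zero_div]

theorem summable_and_tsum_sq_le_of_weighted {ι : Type*} {x w : ι → ℝ} (hx : ∀ i, 0 ≤ x i)
    (hw : ∀ i, 0 < w i) (hw_inv : Summable fun i => (w i)⁻¹)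
    (hwx : Summable fun i => w i * x i ^ 2) :
    Summable x ∧ (∑' i, x i) ^ 2 ≤ (∑' i, (w i)⁻¹) * ∑' i, w i * x i ^ 2 := by
  have hfactor : ∀ i, √(w i)⁻¹ * (√(w i) * x i) = x i := fun i => by
    rw [← mul_assoc, ← Real.sqrt_mul (inv_nonneg.mpr (hw i).le), inv_mul_cancel₀ (hw i).ne',
      Real.sqrt_one, one_mul]
  have hsq₁ : ∀ i, √(w i)⁻¹ ^ (2 : ℝ) = (w i)⁻¹ := fun i => by
    rw [Real.rpow_two, Real.sq_sqrt (inv_nonneg.mpr (hw i).le)]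
  have hsq₂ : ∀ i, (√(w i) * x i) ^ (2 : ℝ) = w i * x i ^ 2 := fun i => by
    rw [Real.rpow_two, mul_pow, Real.sq_sqrt (hw i).le]
  obtain ⟨hsum, hle⟩ := Real.summable_and_inner_le_Lp_mul_Lq_tsum_of_nonneg
    (f := fun i => √(w i)⁻¹) (g := fun i => √(w i) * x i) Real.HolderConjugate.two_two
    (fun i => Real.sqrt_nonneg _) (fun i => mul_nonneg (Real.sqrt_nonneg _) (hx i))
    (by simpa only [hsq₁] using hw_inv) (by simpa only [hsq₂] using hwx)
  simp only [hfactor, hsq₁, hsq₂, ← Real.sqrt_eq_rpow] at hsum hle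
  refine ⟨hsum, (pow_le_pow_left₀ (tsum_nonneg hx) hle 2).trans_eq ?_⟩
  rw [mul_pow, Real.sq_sqrt (tsum_nonneg fun i => (inv_pos.mpr (hw i)).le),
    Real.sq_sqrt (tsum_nonneg fun i => mul_nonneg (hw i).le (sq_nonneg _))]

lemma norm_fexp (d : ℕ) (k : Fin d → ℤ) (x : Fin d → ℝ) : ‖fexp d k x‖ = 1 := by
  rw [fexp, show 2 * (Real.pi : ℂ) * Complex.I * ∑ i, (k i : ℂ) * (x i : ℂ)
      = ((2 * Real.pi * ∑ i, (k i : ℝ) * x i : ℝ) : ℂ) * Complex.I by push_cast; ring,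
    Complex.norm_exp_ofReal_mul_I]

lemma fexp_mul_fexp (d : ℕ) (a b : Fin d → ℤ) (x : Fin d → ℝ) :
    fexp d a x * fexp d b x = fexp d (a + b) x := by
  simp only [fexp, ← Complex.exp_add, ← mul_add, ← Finset.sum_add_distrib, Pi.add_apply]
  push_cast
  simp only [add_mul]

lemma fexp_gridPt_eq_prod {N : ℕ} (hN : 0 < N) (d : ℕ) (m : Fin d → ℤ) (n : Fin d → Fin N) :
    fexp d m (gridPt d N n)
      = ∏ i, (Complex.exp (2 * Real.pi * Complex.I / N) ^ m i) ^ (n i : ℕ) := by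
  have hN' : (N : ℂ) ≠ 0 := by exact_mod_cast hN.ne'
  rw [fexp, Finset.mul_sum, Complex.exp_sum]
  refine Finset.prod_congr rfl fun i _ => ?_
  rw [← Complex.exp_int_mul, ← Complex.exp_nat_mul, gridPt]
  congr 1
  push_cast
  field_simp

lemma sum_fexp_gridPt {N : ℕ} (hN : 0 < N) (d : ℕ) (m : Fin d → ℤ) :
    ∑ n : Fin d → Fin N, fexp d m (gridPt d N n)
      = if ∀ i, (N : ℤ) ∣ m i then (N : ℂ) ^ d else 0 := by
  set ζ := Complex.exp (2 * Real.pi * Complex.I / N)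
  have hζ : IsPrimitiveRoot ζ N := Complex.isPrimitiveRoot_exp N hN.ne'
  simp_rw [fexp_gridPt_eq_prod hN]
  rw [← Fintype.piFinset_univ, ← Finset.prod_univ_sum (t := fun _ => univ)
    (f := fun i (j : Fin N) => (ζ ^ m i) ^ (j : ℕ)), Finset.prod_congr rfl fun i _ =>
      (Fin.sum_univ_eq_sum_range (fun j => (ζ ^ m i) ^ j) N).trans
      (hζ.sum_range_zpow_pow_eq_ite (m i))]
  simp [Finset.prod_ite_zero]

lemma add_nsmul_apply {d : ℕ} (k ℓ : Fin d → ℤ) (N : ℕ) (i : Fin d) :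
    (k + N • ℓ) i = k i + N * ℓ i := by
  rw [Pi.add_apply, Pi.smul_apply, nsmul_eq_mul]

lemma injective_add_nsmul {d N : ℕ} (hN : 0 < N) (k : Fin d → ℤ) :
    Function.Injective fun ℓ : Fin d → ℤ => k + N • ℓ :=
  (add_right_injective k).comp (nsmul_right_injective hN.ne')

lemma dft_eq_tsum_aliases {d N : ℕ} (hN : 0 < N) {v : (Fin d → ℝ) → ℂ} {vhat : (Fin d → ℤ) → ℂ}
    (hsum : Summable fun m => ‖vhat m‖) (hrep : ∀ x, v x = ∑' m, vhat m * fexp d m x)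
    (k : Fin d → ℤ) :
    dft d N (fun n => v (gridPt d N n)) k = ∑' ℓ, vhat (k + N • ℓ) := by
  have hN' : (N : ℂ) ^ d ≠ 0 := pow_ne_zero _ (by exact_mod_cast hN.ne')
  have hterm : ∀ x, Summable fun m => vhat m * fexp d (m + -k) x := fun x =>
    Summable.of_norm (by simpa [norm_fexp] using hsum)
  calc dft d N (fun n => v (gridPt d N n)) k
      = ∑' m, ((N : ℂ) ^ d)⁻¹ * ∑ n, vhat m * fexp d (m + -k) (gridPt d N n) := by
        simp_rw [dft, hrep, ← tsum_mul_right, mul_assoc, fexp_mul_fexp]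
        rw [← Summable.tsum_finsetSum fun n _ => hterm _, tsum_mul_left]
    _ = ∑' m, if ∀ i, (N : ℤ) ∣ (m + -k) i then vhat m else 0 := by
        simp_rw [← Finset.mul_sum, sum_fexp_gridPt hN]
        congr! 2 with m
        split_ifs
        · field_simp
        · simp
    _ = ∑' ℓ, vhat (k + N • ℓ) := by
        refine ((injective_add_nsmul hN k).tsum_eq ?_).symm.trans (tsum_congr fun ℓ => ?_)
        · intro m hm
          have hdvd : ∀ i, (N : ℤ) ∣ (m + -k) i := by by_contra h; exact hm (if_neg h)
          refine ⟨fun i => (hdvd i).choose, funext fun i => ?_⟩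
          have := (hdvd i).choose_spec
          simp only [Pi.add_apply, Pi.neg_apply] at this
          simp only [add_nsmul_apply]
          linarith
        · simp [nsmul_eq_mul]

lemma dft_sub_eq_tsum_ne_zero {d N : ℕ} (hN : 0 < N) {v : (Fin d → ℝ) → ℂ}
    {vhat : (Fin d → ℤ) → ℂ} (hsum : Summable fun m => ‖vhat m‖)
    (hrep : ∀ x, v x = ∑' m, vhat m * fexp d m x) (k : Fin d → ℤ) :
    dft d N (fun n => v (gridPt d N n)) k - vhat k
      = ∑' ℓ : {ℓ : Fin d → ℤ // ℓ ≠ 0}, vhat (k + N • ℓ.1) := by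
  have hal : Summable fun ℓ => vhat (k + N • ℓ) :=
    hsum.of_norm.comp_injective (injective_add_nsmul hN k)
  rw [dft_eq_tsum_aliases hN hsum hrep, hal.tsum_eq_add_tsum_ite 0, smul_zero, add_zero,
    add_sub_cancel_left]
  refine ((_root_.tsum_subtype {ℓ | ℓ ≠ 0} fun ℓ => vhat (k + N • ℓ)).trans
    (tsum_congr fun ℓ => ?_)).symm
  by_cases h : ℓ = 0 <;> simp [h]

lemma sqnormZ_nonneg (d : ℕ) (k : Fin d → ℤ) : 0 ≤ sqnormZ d k :=
  Finset.sum_nonneg fun _ _ => sq_nonneg _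

lemma one_add_sqnormZ_rpow_pos (d : ℕ) (s : ℝ) (k : Fin d → ℤ) : 0 < 1 + sqnormZ d k ^ s :=
  add_pos_of_pos_of_nonneg one_pos (Real.rpow_nonneg (sqnormZ_nonneg d k) s)

lemma inv_sqnormZ_rpow_nonneg (d : ℕ) (s : ℝ) (k : Fin d → ℤ) : 0 ≤ (sqnormZ d k ^ s)⁻¹ :=
  inv_nonneg.mpr (Real.rpow_nonneg (sqnormZ_nonneg d k) s)

lemma one_add_sqnormZ_rpow_mul_norm_sq_nonneg (d : ℕ) (s : ℝ) (vhat : (Fin d → ℤ) → ℂ)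
    (k : Fin d → ℤ) : 0 ≤ (1 + sqnormZ d k ^ s) * ‖vhat k‖ ^ 2 :=
  mul_nonneg (one_add_sqnormZ_rpow_pos d s k).le (sq_nonneg _)

lemma one_le_sqnormZ {d : ℕ} {ℓ : Fin d → ℤ} (hℓ : ℓ ≠ 0) : 1 ≤ sqnormZ d ℓ := by
  obtain ⟨i, hi⟩ := Function.ne_iff.mp hℓ
  calc (1 : ℝ) ≤ (ℓ i : ℝ) ^ 2 := by
        exact_mod_cast (one_le_sq_iff_one_le_abs _).mpr (Int.one_le_abs hi)
    _ ≤ sqnormZ d ℓ := Finset.single_le_sum (f := fun j => (ℓ j : ℝ) ^ 2)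
        (fun j _ => sq_nonneg _) (Finset.mem_univ i)

lemma sqnormZ_eq_norm_sq (d : ℕ) (ℓ : Fin d → ℤ) :
    sqnormZ d ℓ = ‖WithLp.toLp 2 (fun i => (ℓ i : ℝ))‖ ^ 2 := by
  rw [EuclideanSpace.norm_sq_eq]
  simp [sqnormZ]

/-- `ℤ^d` sits in `EuclideanSpace ℝ (Fin d)` as a lattice of rank `d`. -/
lemma summable_sqnormZ_rpow_inv {d : ℕ} {s : ℝ} (hs : (d : ℝ) / 2 < s) :
    Summable fun ℓ : Fin d → ℤ => (sqnormZ d ℓ ^ s)⁻¹ := by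
  let b := (EuclideanSpace.basisFun (Fin d) ℝ).toBasis
  let L := Submodule.span ℤ (Set.range b)
  let e : (Fin d → ℤ) → L := fun ℓ => ⟨WithLp.toLp 2 (fun i => (ℓ i : ℝ)), by
    rw [b.mem_span_iff_repr_mem ℤ]
    intro i
    simp [b]⟩
  have he : Function.Injective e := fun ℓ ℓ' h => funext fun i => by
    simpa [e] using congrArg (fun x : L => (x : EuclideanSpace ℝ (Fin d)) i) h
  have hL : -(2 * s) < -(Module.finrank ℤ L : ℝ) := by
    rw [ZLattice.rank ℝ L, finrank_euclideanSpace_fin]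
    linarith
  refine ((ZLattice.summable_norm_rpow L _ hL).comp_injective he).congr fun ℓ => ?_
  rw [sqnormZ_eq_norm_sq, ← Real.rpow_natCast, ← Real.rpow_mul (norm_nonneg _),
    Function.comp_apply, Real.rpow_neg (norm_nonneg _), Nat.cast_ofNat]
  rfl

lemma summable_inv_one_add_sqnormZ_rpow {d : ℕ} {s : ℝ} (hs : (d : ℝ) / 2 < s) :
    Summable fun k : Fin d → ℤ => (1 + sqnormZ d k ^ s)⁻¹ := by
  refine (summable_sqnormZ_rpow_inv hs).of_norm_bounded_eventually ?_
  filter_upwards [eventually_cofinite_ne 0] with k hk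
  have hpos : 0 < sqnormZ d k ^ s := Real.rpow_pos_of_pos (one_pos.trans_le (one_le_sqnormZ hk)) s
  rw [Real.norm_of_nonneg (inv_nonneg.mpr (one_add_sqnormZ_rpow_pos d s k).le)]
  exact inv_anti₀ hpos (le_add_of_nonneg_left zero_le_one)

lemma abs_le_of_mem_symmPi {d K : ℕ} {k : Fin d → ℤ} (hk : k ∈ symmPi d K) (i : Fin d) :
    |k i| ≤ K := by
  have := Finset.mem_Icc.mp (Fintype.mem_piFinset.mp hk i)
  exact abs_le.mpr ⟨by omega, by omega⟩

lemma injective_add_nsmul_symmPi {d N K : ℕ} (hKN : 2 * K < N) :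
    Function.Injective fun p : symmPi d K × (Fin d → ℤ) => p.1.1 + N • p.2 := by
  rintro ⟨⟨k, hk⟩, ℓ⟩ ⟨⟨k', hk'⟩, ℓ'⟩ h
  have hcoord : ∀ i, k i - k' i = N * (ℓ' i - ℓ i) := fun i => by
    have := congrFun h i
    simp only [add_nsmul_apply] at this
    linarith
  have hk_eq : k = k' := funext fun i => by
    have hlt : |k i - k' i| < N := by
      have := abs_sub (k i) (k' i)
      have := abs_le_of_mem_symmPi hk i
      have := abs_le_of_mem_symmPi hk' i
      omega
    exact sub_eq_zero.mp (Int.eq_zero_of_abs_lt_dvd ⟨_, hcoord i⟩ hlt)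
  subst hk_eq
  obtain rfl : ℓ = ℓ' := injective_add_nsmul (by omega) k h
  rfl

lemma mul_abs_le_two_mul_abs_add {K N : ℕ} (hKN : 2 * K < N) {a b : ℤ} (ha : |a| ≤ K) :
    N * |b| ≤ 2 * |a + N * b| := by
  rcases eq_or_ne b 0 with rfl | hb
  · simp
  have hNb : (N : ℤ) ≤ N * |b| := le_mul_of_one_le_right (by positivity) (Int.one_le_abs hb)
  have htri : N * |b| ≤ |a + N * b| + |a| := by
    have := abs_sub (a + N * b) a
    rwa [add_sub_cancel_left, abs_mul, Nat.abs_cast] at this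
  omega

lemma sq_mul_sqnormZ_le {d N K : ℕ} (hKN : 2 * K < N) {k : Fin d → ℤ} (hk : k ∈ symmPi d K)
    (ℓ : Fin d → ℤ) : (N : ℝ) ^ 2 * sqnormZ d ℓ ≤ 4 * sqnormZ d (k + N • ℓ) := by
  rw [sqnormZ, sqnormZ, Finset.mul_sum, Finset.mul_sum]
  refine Finset.sum_le_sum fun i _ => ?_
  have h := mul_abs_le_two_mul_abs_add hKN (abs_le_of_mem_symmPi hk i) (b := ℓ i)
  have hsq : ((N : ℤ) * |ℓ i|) ^ 2 ≤ (2 * |k i + N * ℓ i|) ^ 2 :=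
    pow_le_pow_left₀ (by positivity) h 2
  rw [mul_pow, mul_pow, sq_abs, sq_abs] at hsq
  rw [add_nsmul_apply]
  exact_mod_cast (by linarith : ((N : ℤ)) ^ 2 * ℓ i ^ 2 ≤ 4 * (k i + N * ℓ i) ^ 2)

lemma inv_one_add_sqnormZ_rpow_le {d N K : ℕ} (hKN : 2 * K < N) {s : ℝ} (hs : 0 ≤ s)
    {k : Fin d → ℤ} (hk : k ∈ symmPi d K) {ℓ : Fin d → ℤ} (hℓ : ℓ ≠ 0) :
    (1 + sqnormZ d (k + N • ℓ) ^ s)⁻¹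
      ≤ (4 * d) ^ s * ((N : ℝ) ^ (-s)) ^ 2 * (sqnormZ d ℓ ^ s)⁻¹ := by
  obtain ⟨i, -⟩ := Function.ne_iff.mp hℓ
  have hd : (1 : ℝ) ≤ d := by exact_mod_cast i.pos
  have hN : (0 : ℝ) < N := by exact_mod_cast (show 0 < N by omega)
  have hQ := one_le_sqnormZ hℓ
  have hP : (N : ℝ) ^ 2 * sqnormZ d ℓ / (4 * d) ≤ sqnormZ d (k + N • ℓ) := by
    rw [div_le_iff₀ (by positivity)]
    nlinarith [sq_mul_sqnormZ_le hKN hk ℓ,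
      mul_le_mul_of_nonneg_left hd (sqnormZ_nonneg d (k + N • ℓ))]
  have hPpos : 0 < sqnormZ d (k + N • ℓ) := lt_of_lt_of_le (by positivity) hP
  calc (1 + sqnormZ d (k + N • ℓ) ^ s)⁻¹
      ≤ (sqnormZ d (k + N • ℓ) ^ s)⁻¹ :=
        inv_anti₀ (Real.rpow_pos_of_pos hPpos s) (le_add_of_nonneg_left zero_le_one)
    _ ≤ (((N : ℝ) ^ 2 * sqnormZ d ℓ / (4 * d)) ^ s)⁻¹ :=
        inv_anti₀ (by positivity) (Real.rpow_le_rpow (by positivity) hP hs)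
    _ = (4 * d) ^ s * ((N : ℝ) ^ (-s)) ^ 2 * (sqnormZ d ℓ ^ s)⁻¹ := by
        rw [Real.div_rpow (by positivity) (by positivity), Real.mul_rpow (by positivity)
          (by positivity), Real.rpow_neg hN.le, ← Real.rpow_pow_comm hN.le]
        field_simp

lemma sum_tsum_add_nsmul_le_tsum {d N K : ℕ} (hKN : 2 * K < N) {f : (Fin d → ℤ) → ℝ}
    (hf0 : ∀ m, 0 ≤ f m) (hf : Summable f) :
    ∑ k ∈ symmPi d K, ∑' ℓ, f (k + N • ℓ) ≤ ∑' m, f m := by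
  have he := injective_add_nsmul_symmPi (d := d) hKN
  have hF : Summable fun p : symmPi d K × (Fin d → ℤ) => f (p.1.1 + N • p.2) :=
    hf.comp_injective he
  calc ∑ k ∈ symmPi d K, ∑' ℓ, f (k + N • ℓ)
      = ∑' p : symmPi d K × (Fin d → ℤ), f (p.1.1 + N • p.2) := by
        rw [hF.tsum_prod, tsum_fintype, Finset.sum_coe_sort (symmPi d K)
          fun k => ∑' ℓ, f (k + N • ℓ)]
    _ ≤ ∑' m, f m :=
        Summable.tsum_le_tsum_of_inj _ he (fun m _ => hf0 m) (fun _ => le_rfl) hF hf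

lemma norm_tsum_aliases_sq_le {d N K : ℕ} (hKN : 2 * K < N) {s : ℝ} (hs : (d : ℝ) / 2 < s)
    {vhat : (Fin d → ℤ) → ℂ} (hHs : Summable fun m => (1 + sqnormZ d m ^ s) * ‖vhat m‖ ^ 2)
    {k : Fin d → ℤ} (hk : k ∈ symmPi d K) :
    ‖∑' ℓ : {ℓ : Fin d → ℤ // ℓ ≠ 0}, vhat (k + N • ℓ.1)‖ ^ 2
      ≤ (4 * d) ^ s * ((N : ℝ) ^ (-s)) ^ 2
          * (∑' ℓ : {ℓ : Fin d → ℤ // ℓ ≠ 0}, (sqnormZ d ℓ.1 ^ s)⁻¹)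
        * ∑' ℓ, (1 + sqnormZ d (k + N • ℓ) ^ s) * ‖vhat (k + N • ℓ)‖ ^ 2 := by
  have hs0 : 0 ≤ s := (div_nonneg (Nat.cast_nonneg d) zero_le_two).trans hs.le
  have hinj := injective_add_nsmul (show 0 < N by omega) k
  have hS : Summable fun ℓ : {ℓ : Fin d → ℤ // ℓ ≠ 0} => (sqnormZ d ℓ.1 ^ s)⁻¹ :=
    (summable_sqnormZ_rpow_inv hs).comp_injective Subtype.val_injective
  have hw_le : ∀ ℓ : {ℓ : Fin d → ℤ // ℓ ≠ 0}, (1 + sqnormZ d (k + N • ℓ.1) ^ s)⁻¹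
      ≤ (4 * d) ^ s * ((N : ℝ) ^ (-s)) ^ 2 * (sqnormZ d ℓ.1 ^ s)⁻¹ := fun ℓ =>
    inv_one_add_sqnormZ_rpow_le hKN hs0 hk ℓ.2
  have hw_inv := Summable.of_nonneg_of_le
    (fun ℓ => (inv_pos.mpr (one_add_sqnormZ_rpow_pos ..)).le) hw_le (hS.mul_left _)
  have hT := hHs.comp_injective hinj
  obtain ⟨hsum, hCS⟩ := summable_and_tsum_sq_le_of_weighted (fun _ => norm_nonneg _)
    (fun _ => one_add_sqnormZ_rpow_pos ..) hw_inv (hT.comp_injective Subtype.val_injective)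
  calc ‖∑' ℓ : {ℓ : Fin d → ℤ // ℓ ≠ 0}, vhat (k + N • ℓ.1)‖ ^ 2
      ≤ (∑' ℓ : {ℓ : Fin d → ℤ // ℓ ≠ 0}, ‖vhat (k + N • ℓ.1)‖) ^ 2 :=
        pow_le_pow_left₀ (norm_nonneg _) (norm_tsum_le_tsum_norm hsum) 2
    _ ≤ _ := hCS
    _ ≤ _ := mul_le_mul ((hw_inv.tsum_le_tsum hw_le (hS.mul_left _)).trans_eq tsum_mul_left)
        (hT.tsum_subtype_le _ {ℓ | ℓ ≠ 0} fun _ => one_add_sqnormZ_rpow_mul_norm_sq_nonneg ..)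
        (tsum_nonneg fun _ => one_add_sqnormZ_rpow_mul_norm_sq_nonneg ..)
        (mul_nonneg (by positivity) (tsum_nonneg fun _ => inv_sqnormZ_rpow_nonneg ..))

theorem dft_aliasing_error_bound_general (d : ℕ) (s : ℝ) (hs : s > (d : ℝ) / 2)
    (N K : ℕ) (hKN : 2 * K < N)
    (v : (Fin d → ℝ) → ℂ) (vhat : (Fin d → ℤ) → ℂ)
    (hHs : Summable fun k : Fin d → ℤ => (1 + sqnormZ d k ^ s) * ‖vhat k‖ ^ 2)
    (hrep : ∀ x, v x = ∑' k : Fin d → ℤ, vhat k * fexp d k x) :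
    Real.sqrt (∑ k ∈ symmPi d K, ‖dft d N (fun n => v (gridPt d N n)) k - vhat k‖ ^ 2)
      ≤ Real.sqrt ((4 * (d : ℝ)) ^ s *
            ∑' ℓ : {ℓ : Fin d → ℤ // ℓ ≠ 0}, (sqnormZ d ℓ.1 ^ s)⁻¹)
        * (N : ℝ) ^ (-s)
        * Real.sqrt (∑' k : Fin d → ℤ, (1 + sqnormZ d k ^ s) * ‖vhat k‖ ^ 2) := by
  set S := ∑' ℓ : {ℓ : Fin d → ℤ // ℓ ≠ 0}, (sqnormZ d ℓ.1 ^ s)⁻¹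
  set H := ∑' k : Fin d → ℤ, (1 + sqnormZ d k ^ s) * ‖vhat k‖ ^ 2
  have hS : 0 ≤ S := tsum_nonneg fun _ => inv_sqnormZ_rpow_nonneg ..
  have hsum : Summable fun m => ‖vhat m‖ :=
    (summable_and_tsum_sq_le_of_weighted (fun _ => norm_nonneg _)
      (one_add_sqnormZ_rpow_pos d s) (summable_inv_one_add_sqnormZ_rpow hs) hHs).1
  have hmain : ∑ k ∈ symmPi d K, ‖dft d N (fun n => v (gridPt d N n)) k - vhat k‖ ^ 2
      ≤ (4 * d) ^ s * ((N : ℝ) ^ (-s)) ^ 2 * S * H := by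
    calc _ ≤ ∑ k ∈ symmPi d K, (4 * d) ^ s * ((N : ℝ) ^ (-s)) ^ 2 * S *
          ∑' ℓ, (1 + sqnormZ d (k + N • ℓ) ^ s) * ‖vhat (k + N • ℓ)‖ ^ 2 :=
          Finset.sum_le_sum fun k hk => by
            rw [dft_sub_eq_tsum_ne_zero (by omega) hsum hrep]
            exact norm_tsum_aliases_sq_le hKN hs hHs hk
      _ ≤ _ := by
          rw [← Finset.mul_sum]
          exact mul_le_mul_of_nonneg_left (sum_tsum_add_nsmul_le_tsum hKN
            (one_add_sqnormZ_rpow_mul_norm_sq_nonneg d s vhat) hHs) (by positivity)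
  calc _ ≤ √((4 * d) ^ s * S * ((N : ℝ) ^ (-s)) ^ 2 * H) :=
        Real.sqrt_le_sqrt (hmain.trans_eq (by ring))
    _ = _ := by
      rw [Real.sqrt_mul (by positivity), Real.sqrt_mul (by positivity),
        Real.sqrt_sq (by positivity)]

/-- Aliasing error bound for the DFT restricted to low modes: for `v ∈ H^s(T^d)`,
`s > d/2`, `1 ≤ K < N/2`, the error `E(k) = DFT(v)(k) − v̂(k)`, `k ∈ [[K]]^d`, satisfies
`‖E‖_{ℓ²([[K]]^d)} ≤ α_{d,s} N^{-s} ‖v‖_{H^s}` with `α_{d,s}² = (4d)^s ∑_{ℓ≠0} |ℓ|^{-2s}`. -/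
theorem dft_aliasing_error_bound (d : ℕ) (hd : 0 < d) (s : ℝ) (hs : s > (d : ℝ) / 2)
    (N K : ℕ) (hN : 1 < N) (hK : 1 ≤ K) (hKN : 2 * K < N)
    (v : (Fin d → ℝ) → ℂ) (vhat : (Fin d → ℤ) → ℂ)
    (hHs : Summable fun k : Fin d → ℤ => (1 + sqnormZ d k ^ s) * ‖vhat k‖ ^ 2)
    (hrep : ∀ x, v x = ∑' k : Fin d → ℤ, vhat k * fexp d k x) :
    Real.sqrt (∑ k ∈ symmPi d K, ‖dft d N (fun n => v (gridPt d N n)) k - vhat k‖ ^ 2)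
      ≤ Real.sqrt ((4 * (d : ℝ)) ^ s *
            ∑' ℓ : {ℓ : Fin d → ℤ // ℓ ≠ 0}, (sqnormZ d ℓ.1 ^ s)⁻¹)
        * (N : ℝ) ^ (-s)
        * Real.sqrt (∑' k : Fin d → ℤ, (1 + sqnormZ d k ^ s) * ‖vhat k‖ ^ 2) :=
  dft_aliasing_error_bound_general d s hs N K hKN v vhat hHs hrep

end
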